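/- arXiv:2103.12018 — 4 statements merged into one kernel-verified Lean document; each statement's English description precedes it below -/
import Mathlib

section
/- Let $N \to \infty$. Then $\sqrt{N}\, P(W_N = 0) \to \sqrt{3/(4\pi)}$; that is, $P(W_N = 0) \sim \sqrt{3/(4\pi N)}$. -/
open MeasureTheory ProbabilityTheory Filter

noncomputable section

/-- `D_N = ∑ X_i`. -/
def DN {Ω : Type*} (X : ℕ → Ω → ℝ) (N : ℕ) (ω : Ω) : ℝ := ∑ i ∈ Finset.range N, X i ω

/-- `T_N = ∑ X_i²`. -/
def TN {Ω : Type*} (X : ℕ → Ω → ℝ) (N : ℕ) (ω : Ω) : ℝ := ∑ i ∈ Finset.range N, (X i ω) ^ 2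

/-- `W_N = D_N / √T_N` if `T_N > 0`, else `0`. -/
def WN {Ω : Type*} (X : ℕ → Ω → ℝ) (N : ℕ) (ω : Ω) : ℝ :=
  if 0 < TN X N ω then DN X N ω / Real.sqrt (TN X N ω) else 0

/-!
`W_N` vanishes exactly when `D_N` does. The walk `D_N` is integer valued with characteristic
function `((1 + 2 cos θ) / 3) ^ N`, so Fourier inversion on `[-π, π]` gives
`P(D_N = 0) = (2π)⁻¹ ∫_{-π}^{π} ((1 + 2 cos θ) / 3) ^ N dθ`. After the substitution `θ = t / √N`
the integrand tends to `exp (-t² / 3)` and is dominated by `exp (-t² / 15)`, so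
`√N P(D_N = 0) → (2π)⁻¹ √(3π) = √(3 / (4π))`.
-/

open Real Topology

lemma WN_eq_zero_iff {Ω : Type*} (X : ℕ → Ω → ℝ) (N : ℕ) (ω : Ω) :
    WN X N ω = 0 ↔ DN X N ω = 0 := by
  unfold WN
  split_ifs with hT
  · simp [(Real.sqrt_pos.2 hT).ne']
  · have hT : TN X N ω = 0 :=
      le_antisymm (not_lt.1 hT) (Finset.sum_nonneg fun i _ ↦ sq_nonneg _)
    have hX : ∀ i ∈ Finset.range N, X i ω = 0 := fun i hi ↦
      pow_eq_zero_iff two_ne_zero |>.1 <|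
        (Finset.sum_eq_zero_iff_of_nonneg fun j _ ↦ sq_nonneg (X j ω)).1 hT i hi
    exact iff_of_true rfl (Finset.sum_eq_zero hX)

lemma integral_exp_int_mul_I (n : ℤ) :
    ∫ t in -π..π, Complex.exp (t * n * Complex.I) = if n = 0 then 2 * π else 0 := by
  split_ifs with hn
  · simp [hn, two_mul]
  have hn' : (n : ℝ) ≠ 0 := Int.cast_ne_zero.2 hn
  have := intervalIntegral.integral_comp_mul_right (a := -π) (b := π)
    (fun u : ℝ ↦ Complex.exp (u * Complex.I)) hn'
  push_cast at this
  rw [this, neg_mul, integral_exp_mul_I_eq_sin, mul_comm π, Real.sin_int_mul_pi]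
  simp

section

variable {Ω : Type*} [MeasurableSpace Ω] {μ : Measure Ω}

lemma measureReal_eq_zero_eq_integral_charFun [IsFiniteMeasure μ] {Y : Ω → ℝ}
    (hY : Measurable Y) (hY_int : ∀ᵐ ω ∂μ, ∃ n : ℤ, Y ω = n) :
    (μ.real {ω | Y ω = 0} : ℂ) = (2 * π)⁻¹ * ∫ t in -π..π, charFun (μ.map Y) t := by
  have hmap (t : ℝ) : charFun (μ.map Y) t = ∫ ω, Complex.exp (t * Y ω * Complex.I) ∂μ := by
    rw [charFun_apply_real, integral_map hY.aemeasurable (by fun_prop)]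
  have hswap : ∫ t in -π..π, charFun (μ.map Y) t
      = ∫ ω, (∫ t in -π..π, Complex.exp (t * Y ω * Complex.I)) ∂μ := by
    simp_rw [hmap]
    have : IsFiniteMeasure (volume.restrict (Set.uIoc (-π) π)) :=
      isFiniteMeasure_restrict.2 measure_Ioc_lt_top.ne
    refine intervalIntegral_integral_swap (Integrable.of_bound ?_ 1 (ae_of_all _ fun ⟨t, ω⟩ ↦ ?_))
    · have hexp : Continuous fun p : ℝ × ℝ ↦ Complex.exp (p.1 * p.2 * Complex.I) := by fun_prop
      exact (hexp.measurable.comp (measurable_fst.prodMk (hY.comp measurable_snd)))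
        |>.aestronglyMeasurable
    · rw [Function.uncurry_apply_pair, ← Complex.ofReal_mul, Complex.norm_exp_ofReal_mul_I]
  have hinner : (fun ω ↦ ∫ t in -π..π, Complex.exp (t * Y ω * Complex.I))
      =ᵐ[μ] (Y ⁻¹' {0}).indicator fun _ ↦ (2 * π : ℂ) := by
    filter_upwards [hY_int] with ω ⟨n, hn⟩
    by_cases h0 : n = 0 <;> simp [hn, h0, integral_exp_int_mul_I, two_mul]
  change (μ.real (Y ⁻¹' {0}) : ℂ) = _
  rw [hswap, integral_congr_ae hinner, integral_indicator_const _ (hY (measurableSet_singleton 0)),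
    Complex.real_smul]
  push_cast
  field_simp

lemma charFun_map_eq_sum_of_ae_mem [IsFiniteMeasure μ] {Y : Ω → ℝ} (hY : Measurable Y)
    {s : Finset ℝ} (hs : ∀ᵐ ω ∂μ, Y ω ∈ s) (t : ℝ) :
    charFun (μ.map Y) t = ∑ x ∈ s, μ.real (Y ⁻¹' {x}) • Complex.exp (t * x * Complex.I) := by
  have hsupp : μ.map Y = (μ.map Y).restrict s :=
    (Measure.restrict_eq_self_of_ae_mem ((ae_map_iff hY.aemeasurable s.measurableSet).2 hs)).symm
  rw [charFun_apply_real, hsupp, setIntegral_finset _ IntegrableOn.finset]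
  refine Finset.sum_congr rfl fun x _ ↦ ?_
  rw [map_measureReal_apply hY (measurableSet_singleton x)]

section ThreePoint

variable [IsProbabilityMeasure μ] {Y : Ω → ℝ} (hY : Measurable Y)
  (hlaw : μ {ω | Y ω = -1} = 1/3 ∧ μ {ω | Y ω = 0} = 1/3 ∧ μ {ω | Y ω = 1} = 1/3)
include hY hlaw

lemma ae_mem_of_three_point : ∀ᵐ ω ∂μ, Y ω ∈ ({-1, 0, 1} : Finset ℝ) := by
  obtain ⟨h₁, h₂, h₃⟩ := hlaw
  have hs : MeasurableSet (Y ⁻¹' ({-1, 0, 1} : Finset ℝ)) := hY (Finset.measurableSet _)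
  refine ae_iff.2 ((prob_compl_eq_zero_iff hs).2 ?_)
  rw [← Measure.map_apply hY (Finset.measurableSet _), ← sum_measure_singleton,
    Finset.sum_insert (by norm_num), Finset.sum_insert (by norm_num), Finset.sum_singleton]
  simp only [Measure.map_apply hY (measurableSet_singleton _)]
  change μ {ω | Y ω = -1} + (μ {ω | Y ω = 0} + μ {ω | Y ω = 1}) = 1
  rw [h₁, h₂, h₃, ← add_assoc, ENNReal.add_thirds]

lemma charFun_map_of_three_point (t : ℝ) :
    charFun (μ.map Y) t = ((1 + 2 * cos t) / 3 : ℝ) := by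
  rw [charFun_map_eq_sum_of_ae_mem hY (ae_mem_of_three_point hY hlaw)]
  obtain ⟨h₁, h₂, h₃⟩ := hlaw
  have hthird (x : ℝ) (hx : μ {ω | Y ω = x} = 1/3) : μ.real (Y ⁻¹' {x}) = 1/3 := by
    rw [measureReal_def]; exact (congrArg ENNReal.toReal hx).trans (by simp)
  rw [Finset.sum_insert (by norm_num), Finset.sum_insert (by norm_num), Finset.sum_singleton,
    hthird _ h₁, hthird _ h₂, hthird _ h₃]
  push_cast
  simp only [Complex.real_smul, Complex.cos, mul_neg, mul_one, mul_zero, zero_mul,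
    Complex.exp_zero, neg_mul]
  push_cast
  ring

end ThreePoint

end

section RandomWalk

variable {Ω : Type*} [MeasurableSpace Ω] {μ : Measure Ω} [IsProbabilityMeasure μ]
  {X : ℕ → Ω → ℝ} (hmeas : ∀ i, Measurable (X i))
  (hdist : ∀ i, μ {ω | X i ω = -1} = 1/3 ∧ μ {ω | X i ω = 0} = 1/3 ∧ μ {ω | X i ω = 1} = 1/3)
include hmeas hdist

lemma charFun_map_DN (hindep : iIndepFun X μ) (N : ℕ) (t : ℝ) :
    charFun (μ.map (DN X N)) t = (((1 + 2 * cos t) / 3) ^ N : ℝ) := by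
  have := (hindep.restrict (Finset.range N)).charFun_map_fun_finsetSum_eq_prod
    fun i _ ↦ (hmeas i).aemeasurable
  change charFun (μ.map fun ω ↦ ∑ i ∈ Finset.range N, X i ω) t = _
  rw [this, Finset.prod_apply]
  simp [charFun_map_of_three_point (hmeas _) (hdist _), div_pow]

lemma ae_exists_int_DN_eq (N : ℕ) : ∀ᵐ ω ∂μ, ∃ n : ℤ, DN X N ω = n := by
  have hX : ∀ᵐ ω ∂μ, ∀ i, ∃ n : ℤ, X i ω = n := by
    refine ae_all_iff.2 fun i ↦ ?_
    filter_upwards [ae_mem_of_three_point (hmeas i) (hdist i)] with ω hω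
    simp only [Finset.mem_insert, Finset.mem_singleton] at hω
    rcases hω with h | h | h
    exacts [⟨-1, by simp [h]⟩, ⟨0, by simp [h]⟩, ⟨1, by simp [h]⟩]
  filter_upwards [hX] with ω hω
  choose n hn using hω
  exact ⟨∑ i ∈ Finset.range N, n i, by simp [DN, hn]⟩

lemma measureReal_DN_eq_zero (hindep : iIndepFun X μ) (N : ℕ) :
    μ.real {ω | DN X N ω = 0} = (2 * π)⁻¹ * ∫ θ in -π..π, ((1 + 2 * cos θ) / 3) ^ N := by
  have := measureReal_eq_zero_eq_integral_charFun (Y := DN X N)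
    (Finset.measurable_sum _ fun i _ ↦ hmeas i) (ae_exists_int_DN_eq hmeas hdist N)
  simp_rw [charFun_map_DN hmeas hdist hindep, intervalIntegral.integral_ofReal] at this
  exact_mod_cast this

end RandomWalk

lemma tendsto_sqrt_mul_intervalIntegral_pow {g h : ℝ → ℝ} {r c : ℝ} (hg : Continuous g)
    (hr : 0 < r) (hc : 0 < c) (hbound : ∀ θ, |θ| ≤ r → |g θ| ≤ exp (-c * θ ^ 2))
    (hlim : ∀ t, Tendsto (fun N : ℕ ↦ g (t / √N) ^ N) atTop (𝓝 (h t))) :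
    Tendsto (fun N : ℕ ↦ √N * ∫ θ in -r..r, g θ ^ N) atTop (𝓝 (∫ t, h t)) := by
  set F : ℕ → ℝ → ℝ := fun N ↦
    (Set.Ioc (-(r * √N)) (r * √N)).indicator fun t ↦ g (t / √N) ^ N
  have hF : ∀ᶠ N : ℕ in atTop, ∫ t, F N t = √N * ∫ θ in -r..r, g θ ^ N := by
    filter_upwards [eventually_ge_atTop 1] with N hN
    have hN : 0 < √N := Real.sqrt_pos.2 (by exact_mod_cast hN)
    rw [integral_indicator measurableSet_Ioc, ← intervalIntegral.integral_of_le (by nlinarith),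
      intervalIntegral.integral_comp_div (fun θ ↦ g θ ^ N) hN.ne', neg_div,
      mul_div_cancel_right₀ _ hN.ne', smul_eq_mul]
  refine (tendsto_integral_of_dominated_convergence (fun t ↦ exp (-c * t ^ 2))
    (fun N ↦ ?_) (integrable_exp_neg_mul_sq hc) (fun N ↦ ae_of_all _ fun t ↦ ?_)
    (ae_of_all _ fun t ↦ ?_)).congr' hF
  · exact (Continuous.aestronglyMeasurable (by fun_prop)).indicator measurableSet_Ioc
  · by_cases ht : t ∈ Set.Ioc (-(r * √N)) (r * √N)
    · have hN : 0 < √N := pos_of_mul_pos_right (by linarith [ht.1, ht.2]) hr.le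
      have ht' : |t / √N| ≤ r := by
        rw [abs_div, abs_of_pos hN, div_le_iff₀ hN]
        exact abs_le.2 ⟨ht.1.le, ht.2⟩
      calc ‖F N t‖ = |g (t / √N)| ^ N := by simp [F, Set.indicator_of_mem ht]
        _ ≤ exp (-c * (t / √N) ^ 2) ^ N := by gcongr; exact hbound _ ht'
        _ = exp (-c * t ^ 2) := by
          have : (N : ℝ) ≠ 0 := (Real.sqrt_pos.1 hN).ne'
          rw [← Real.exp_nat_mul, div_pow, Real.sq_sqrt (Nat.cast_nonneg N)]
          field_simp
    · simp [F, Set.indicator_of_notMem ht, (exp_pos _).le]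
  · refine (hlim t).congr' ?_
    have : Tendsto (fun N : ℕ ↦ r * √N) atTop atTop :=
      (tendsto_sqrt_atTop.comp tendsto_natCast_atTop_atTop).const_mul_atTop hr
    filter_upwards [this.eventually_gt_atTop |t|] with N hN
    have ht : t ∈ Set.Ioc (-(r * √N)) (r * √N) :=
      ⟨by linarith [neg_abs_le t], by linarith [le_abs_self t]⟩
    simp only [F, Set.indicator_of_mem ht]

lemma tendsto_one_add_two_cos_div_three_pow (t : ℝ) :
    Tendsto (fun N : ℕ ↦ ((1 + 2 * cos (t / √N)) / 3) ^ N) atTop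
      (𝓝 (exp (-(1 / 3) * t ^ 2))) := by
  set s : ℕ → ℝ := fun N ↦ t / √N
  have hs : Tendsto s atTop (𝓝 0) :=
    tendsto_const_nhds.div_atTop (tendsto_sqrt_atTop.comp tendsto_natCast_atTop_atTop)
  have hNs : ∀ᶠ N : ℕ in atTop, N * s N ^ 2 = t ^ 2 := by
    filter_upwards [eventually_ge_atTop 1] with N hN
    have : (N : ℝ) ≠ 0 := by positivity
    simp only [s, div_pow, Real.sq_sqrt (Nat.cast_nonneg N)]
    field_simp
  have herr : Tendsto (fun N : ℕ ↦ N * (cos (s N) - (1 - s N ^ 2 / 2))) atTop (𝓝 0) := by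
    refine squeeze_zero_norm' ?_ (by simpa using (hs.pow 2).const_mul (t ^ 2 * (5 / 96)))
    filter_upwards [hNs, hs.abs.eventually (ge_mem_nhds (by norm_num : |(0 : ℝ)| < 1))]
      with N hN h1
    calc ‖N * (cos (s N) - (1 - s N ^ 2 / 2))‖ ≤ N * (|s N| ^ 4 * (5 / 96)) := by
          rw [norm_mul, Real.norm_natCast, Real.norm_eq_abs]
          exact mul_le_mul_of_nonneg_left (cos_bound h1) (Nat.cast_nonneg N)
      _ = t ^ 2 * (5 / 96) * s N ^ 2 := by
          rw [← hN, show |s N| ^ 4 = (|s N| ^ 2) ^ 2 by ring, sq_abs]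
          ring
  have hlin :
      Tendsto (fun N : ℕ ↦ N * (2 / 3 * (cos (s N) - 1))) atTop (𝓝 (-(1 / 3) * t ^ 2)) := by
    have := (herr.const_mul (2 / 3)).const_add (-(1 / 3) * t ^ 2)
    rw [mul_zero, add_zero] at this
    refine this.congr' ?_
    filter_upwards [hNs] with N hN
    linear_combination (1 / 3) * hN
  refine (Real.tendsto_one_add_pow_exp_of_tendsto hlin).congr fun N ↦ ?_
  ring

lemma abs_one_add_two_cos_div_three_le {θ : ℝ} (hθ : |θ| ≤ π) :
    |(1 + 2 * cos θ) / 3| ≤ exp (-(1 / 15) * θ ^ 2) := by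
  have hπ : π ^ 2 < 10 := by nlinarith [pi_lt_d2, pi_pos]
  have hθπ : θ ^ 2 ≤ π ^ 2 := by simpa only [sq_abs] using pow_le_pow_left₀ (abs_nonneg θ) hθ 2
  have hexp := add_one_le_exp (-(1 / 15) * θ ^ 2)
  have hcos := cos_le_one_sub_mul_cos_sq hθ
  have hquad : 1 / 15 * θ ^ 2 ≤ 2 / 3 * (2 / π ^ 2 * θ ^ 2) := by
    rw [show 2 / 3 * (2 / π ^ 2 * θ ^ 2) = 4 / (3 * π ^ 2) * θ ^ 2 by ring]
    refine mul_le_mul_of_nonneg_right ?_ (sq_nonneg θ)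
    rw [div_le_div_iff₀ (by norm_num) (by positivity)]
    linarith
  rw [abs_le]
  constructor <;> nlinarith [neg_one_le_cos θ]

lemma tendsto_sqrt_mul_integral_one_add_two_cos_div_three_pow :
    Tendsto (fun N : ℕ ↦ √N * ∫ θ in -π..π, ((1 + 2 * cos θ) / 3) ^ N) atTop
      (𝓝 √(3 * π)) := by
  have := tendsto_sqrt_mul_intervalIntegral_pow (by fun_prop) pi_pos
    (by norm_num : (0 : ℝ) < 1 / 15) (fun θ ↦ abs_one_add_two_cos_div_three_le)
    tendsto_one_add_two_cos_div_three_pow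
  rwa [integral_gaussian, div_div_eq_mul_div, div_one, mul_comm] at this

theorem statement0 {Ω : Type*} [MeasurableSpace Ω] (μ : Measure Ω) [IsProbabilityMeasure μ]
    (X : ℕ → Ω → ℝ) (hmeas : ∀ i, Measurable (X i))
    (hindep : iIndepFun X μ)
    (hdist : ∀ i, μ {ω | X i ω = -1} = 1/3 ∧ μ {ω | X i ω = 0} = 1/3 ∧ μ {ω | X i ω = 1} = 1/3) :
    Tendsto (fun N : ℕ ↦ Real.sqrt N * (μ {ω | WN X N ω = 0}).toReal) atTop
      (nhds (Real.sqrt (3 / (4 * Real.pi)))) := by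
  have hprob (N : ℕ) : (μ {ω | WN X N ω = 0}).toReal
      = (2 * π)⁻¹ * ∫ θ in -π..π, ((1 + 2 * cos θ) / 3) ^ N := by
    simp_rw [WN_eq_zero_iff]
    exact measureReal_DN_eq_zero hmeas hdist hindep N
  have hlim : (2 * π)⁻¹ * √(3 * π) = √(3 / (4 * π)) := by
    rw [show 3 / (4 * π) = 3 * π / (2 * π) ^ 2 by field_simp; ring,
      sqrt_div' _ (by positivity), sqrt_sq (by positivity), inv_mul_eq_div]
  simp_rw [hprob, mul_left_comm (√_ : ℝ)]
  rw [← hlim]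
  exact tendsto_sqrt_mul_integral_one_add_two_cos_div_three_pow.const_mul _
end
end

section
/- There exists a constant $C > 0$ such that for all $N \ge 1$, $\left|\sum_{n=0}^{N} \frac{3}{\sqrt{\pi N}} e^{-9(n-N/3)^2/N} - 1\right| \le C/N$; in particular this Riemann sum of the normal $N(N/3, N/18)$ density over the integers $0,1,\dots,N$ tends to $1$ as $N \to \infty$. -/
/-!
Poisson summation, in the form of the functional equation of Jacobi's theta function, gives
`∑_{n ∈ ℤ} exp (-b (n - μ)²) = √(π / b) · θ₂(μ, iπ/b)`, and `θ₂(μ, it) = 1 + O(exp (-π t))`.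
For `b = 9 / N` the prefactor `3 / √(π N)` is exactly `1 / √(π / b)` and `π² / b ≥ N`, so the
normalised sum over all of `ℤ` is `1 + O(exp (-N))`. The terms with `n ∉ [0, N]` lie at distance
at least `N / 3` from the mean and contribute another `O(exp (-N))`, and `exp (-N) ≤ 1 / N`.
-/

open MeasureTheory ProbabilityTheory Filter

noncomputable section

open Real Complex

theorem norm_tsum_sub_le_tsum_norm_sub {ι E : Type*} [NormedAddCommGroup E] [CompleteSpace E]
    {f : ι → E} (hf : Summable (‖f ·‖)) (i : ι) :
    ‖∑' n, f n - f i‖ ≤ ∑' n, ‖f n‖ - ‖f i‖ := by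
  classical
  have hnorm : (fun n => ‖if n = i then 0 else f n‖) = fun n => if n = i then 0 else ‖f n‖ := by
    ext n; split_ifs <;> simp
  rw [hf.of_norm.tsum_eq_add_tsum_ite i, hf.tsum_eq_add_tsum_ite i, add_sub_cancel_left,
    add_sub_cancel_left, ← hnorm]
  refine norm_tsum_le_tsum_norm ?_
  rw [hnorm]
  exact hf.of_nonneg_of_le (fun n => by split_ifs <;> simp) (fun n => by split_ifs <;> simp)

theorem tsum_le_two_mul_of_le_mul_exp_neg {f : ℕ → ℝ} {c : ℝ} (hf₀ : ∀ k, 0 ≤ f k)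
    (hf : ∀ k : ℕ, f k ≤ c * rexp (-k)) : ∑' k, f k ≤ 2 * c := by
  have hgeom : HasSum (fun k : ℕ => c * rexp (-k)) (c * (1 - rexp (-1))⁻¹) := by
    refine (hasSum_geometric_of_lt_one (exp_pos _).le
      (exp_lt_one_iff.mpr neg_one_lt_zero)).mul_left c |>.congr_fun fun k => ?_
    rw [← Real.exp_nat_mul, mul_neg_one]
  have hc : 0 ≤ c := by simpa using (hf₀ 0).trans (hf 0)
  calc ∑' k, f k ≤ c * (1 - rexp (-1))⁻¹ :=
        hasSum_le hf (Summable.of_nonneg_of_le hf₀ hf hgeom.summable).hasSum hgeom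
    _ ≤ 2 * c := by
        have := exp_neg_one_lt_half
        rw [mul_comm]
        gcongr
        rw [inv_le_comm₀ (by linarith) two_pos]; linarith

theorem tsum_int_eq_sum_range_add_tsum_add_tsum {E : Type*} [NormedAddCommGroup E] [CompleteSpace E]
    {f : ℤ → E} (hf : Summable f) (m : ℕ) :
    ∑' n : ℤ, f n =
      ∑ k ∈ Finset.range m, f k + (∑' k : ℕ, f (k + m : ℕ) + ∑' k : ℕ, f (-(k + 1))) := by
  have hpos : Summable fun k : ℕ => f k := hf.comp_injective Nat.cast_injective
  rw [tsum_of_nat_of_neg_add_one hpos (hf.comp_injective fun a b h => by simpa using h),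
    ← hpos.sum_add_tsum_nat_add m, add_assoc]

theorem ofReal_exp_neg_mul_sub_sq (b μ : ℝ) (n : ℤ) :
    (rexp (-b * (n - μ) ^ 2) : ℂ) =
      cexp (-b * μ ^ 2) * jacobiTheta₂_term n (-(b * μ / π) * I) (b / π * I) := by
  have hπ : (π : ℂ) ≠ 0 := ofReal_ne_zero.mpr pi_ne_zero
  rw [jacobiTheta₂_term, ofReal_exp, ← Complex.exp_add]
  congr 1
  push_cast
  field_simp
  ring_nf
  rw [I_sq]
  ring

theorem summable_exp_neg_mul_sub_sq {b : ℝ} (hb : 0 < b) (μ : ℝ) :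
    Summable fun n : ℤ => rexp (-b * (n - μ) ^ 2) := by
  refine Complex.summable_ofReal.mp ?_
  simp_rw [ofReal_exp_neg_mul_sub_sq]
  refine ((summable_jacobiTheta₂_term_iff _ _).mpr ?_).mul_left _
  simpa using div_pos hb pi_pos

theorem ofReal_tsum_exp_neg_mul_sub_sq {b : ℝ} (hb : 0 < b) (μ : ℝ) :
    ((∑' n : ℤ, rexp (-b * (n - μ) ^ 2) : ℝ) : ℂ) = √(π / b) * jacobiTheta₂ μ (π / b * I) := by
  have hπ : (π : ℂ) ≠ 0 := ofReal_ne_zero.mpr pi_ne_zero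
  have hb' : (b : ℂ) ≠ 0 := ofReal_ne_zero.mpr hb.ne'
  have hsqrt : (-I * (b / π * I)) ^ (1 / 2 : ℂ) = (√(b / π) : ℂ) := by
    rw [show -I * (b / π * I) = ((b / π : ℝ) : ℂ) by push_cast; ring_nf; rw [I_sq]; ring,
      sqrt_eq_rpow, ofReal_cpow (by positivity)]
    norm_num
  rw [ofReal_tsum]
  simp_rw [ofReal_exp_neg_mul_sub_sq]
  have hz : -(b * μ / π) * I / (b / π * I) = -(μ : ℂ) := by field_simp
  have hτ : -1 / (b / π * I) = π / b * I := by field_simp; rw [I_sq]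
  have hexp : cexp (-π * I * (-(b * μ / π) * I) ^ 2 / (b / π * I)) = cexp (b * μ ^ 2) := by
    congr 1; field_simp; ring_nf; rw [I_sq]; ring
  rw [tsum_mul_left, ← jacobiTheta₂, jacobiTheta₂_functional_equation, hsqrt, hz, hτ, hexp,
    jacobiTheta₂_neg_left, one_div, ← ofReal_inv, ← sqrt_inv, inv_div]
  have hcancel : cexp (-b * μ ^ 2) * cexp (b * μ ^ 2) = 1 := by
    rw [← Complex.exp_add, neg_mul, neg_add_cancel, Complex.exp_zero]
  linear_combination (√(π / b) * jacobiTheta₂ μ (π / b * I)) * hcancel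

theorem norm_jacobiTheta₂_sub_one_le (z : ℝ) {t : ℝ} (ht : 0 < t) :
    ‖jacobiTheta₂ z (t * I) - 1‖ ≤ 2 / (1 - rexp (-π * t)) * rexp (-π * t) := by
  have him : 0 < (t * I).im := by simpa using ht
  have hnorm : ∀ n : ℤ, ‖jacobiTheta₂_term n z (t * I)‖ = rexp (-π * n ^ 2 * t) := fun n => by
    simp [norm_jacobiTheta₂_term]
  have hθ : jacobiTheta (t * I) = ((∑' n : ℤ, rexp (-π * n ^ 2 * t) : ℝ) : ℂ) := by
    rw [jacobiTheta, ofReal_tsum]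
    refine tsum_congr fun n => ?_
    rw [ofReal_exp]
    congr 1
    push_cast
    ring_nf
    rw [I_sq]
    ring
  calc ‖jacobiTheta₂ z (t * I) - 1‖
      = ‖∑' n, jacobiTheta₂_term n z (t * I) - jacobiTheta₂_term 0 z (t * I)‖ := by
        simp [jacobiTheta₂, jacobiTheta₂_term]
    _ ≤ ∑' n, ‖jacobiTheta₂_term n z (t * I)‖ - ‖jacobiTheta₂_term 0 z (t * I)‖ :=
        norm_tsum_sub_le_tsum_norm_sub ((summable_jacobiTheta₂_term_iff _ _).mpr him).norm 0
    _ = ∑' n : ℤ, rexp (-π * n ^ 2 * t) - 1 := by simp_rw [hnorm]; simp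
    _ ≤ ‖jacobiTheta (t * I) - 1‖ := by
        rw [hθ, ← ofReal_one, ← ofReal_sub, norm_real]
        exact le_abs_self _
    _ ≤ 2 / (1 - rexp (-π * t)) * rexp (-π * t) := by
        simpa using norm_jacobiTheta_sub_one_le him

theorem norm_jacobiTheta₂_sub_one_le_four_mul_exp (z : ℝ) {t s : ℝ} (hs : 1 ≤ s)
    (hst : s ≤ π * t) : ‖jacobiTheta₂ z (t * I) - 1‖ ≤ 4 * rexp (-s) := by
  have ht : 0 < t := pos_of_mul_pos_right (by linarith) pi_pos.le
  have hq : rexp (-π * t) ≤ rexp (-s) := exp_le_exp.mpr (by linarith)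
  have hhalf : rexp (-s) < 1 / 2 :=
    (exp_le_exp.mpr (by linarith)).trans_lt exp_neg_one_lt_half
  refine (norm_jacobiTheta₂_sub_one_le z ht).trans ?_
  rw [div_mul_eq_mul_div, div_le_iff₀ (by linarith)]
  nlinarith [exp_pos (-π * t)]

theorem abs_inv_sqrt_mul_tsum_exp_neg_mul_sub_sq_sub_one_le {b μ s : ℝ} (hb : 0 < b)
    (hs : 1 ≤ s) (hsb : s ≤ π ^ 2 / b) :
    |(√(π / b))⁻¹ * ∑' n : ℤ, rexp (-b * (n - μ) ^ 2) - 1| ≤ 4 * rexp (-s) := by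
  have hθ : (((√(π / b))⁻¹ * ∑' n : ℤ, rexp (-b * (n - μ) ^ 2) : ℝ) : ℂ) =
      jacobiTheta₂ μ ((π / b : ℝ) * I) := by
    rw [ofReal_mul, ofReal_tsum_exp_neg_mul_sub_sq hb, ofReal_inv, inv_mul_cancel_left₀]
    · push_cast; rfl
    · exact ofReal_ne_zero.mpr (sqrt_ne_zero'.mpr (by positivity))
  rw [← Real.norm_eq_abs, ← norm_real, ofReal_sub, hθ, ofReal_one]
  exact norm_jacobiTheta₂_sub_one_le_four_mul_exp μ hs (by rwa [mul_div_assoc', ← sq])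

theorem exp_neg_nine_div_mul_sub_sq_le {N x : ℝ} (hN : 0 < N) (hx : x ≤ 0 ∨ N ≤ x) :
    rexp (-(9 / N) * (x - N / 3) ^ 2) ≤ rexp (-N) * rexp (-|x|) := by
  have hquad : N * (N + |x|) ≤ 9 * (x - N / 3) ^ 2 := by
    rcases hx with hx | hx
    · rw [abs_of_nonpos hx]; nlinarith
    · rw [abs_of_nonneg (hN.le.trans hx)]; nlinarith
  have : N + |x| ≤ 9 / N * (x - N / 3) ^ 2 := by
    rw [div_mul_eq_mul_div, le_div_iff₀ hN]; linarith
  rw [← Real.exp_add, exp_le_exp]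
  linarith

theorem abs_tsum_sub_sum_range_exp_le {N : ℕ} (hN : 0 < N) :
    |∑' n : ℤ, rexp (-(9 / N) * (n - N / 3) ^ 2) -
        ∑ n ∈ Finset.range (N + 1), rexp (-(9 / N) * ((n : ℝ) - N / 3) ^ 2)| ≤ 4 * rexp (-N) := by
  have hN' : (0 : ℝ) < N := by exact_mod_cast hN
  have hright : ∑' k : ℕ, rexp (-(9 / N) * (((k + (N + 1) : ℕ) : ℝ) - N / 3) ^ 2) ≤
      2 * rexp (-N) := by
    refine tsum_le_two_mul_of_le_mul_exp_neg (fun _ => (exp_pos _).le) fun k => ?_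
    refine (exp_neg_nine_div_mul_sub_sq_le hN' (Or.inr (by push_cast; linarith))).trans ?_
    gcongr
    rw [abs_of_nonneg (by positivity)]
    push_cast
    linarith
  have hleft : ∑' k : ℕ, rexp (-(9 / N) * (((-(k + 1) : ℤ) : ℝ) - N / 3) ^ 2) ≤
      2 * rexp (-N) := by
    refine tsum_le_two_mul_of_le_mul_exp_neg (fun _ => (exp_pos _).le) fun k => ?_
    refine (exp_neg_nine_div_mul_sub_sq_le hN' (Or.inl (by push_cast; linarith))).trans ?_
    gcongr
    push_cast
    rw [abs_of_nonpos (by linarith)]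
    linarith
  have hsplit := tsum_int_eq_sum_range_add_tsum_add_tsum
    (summable_exp_neg_mul_sub_sq (b := 9 / N) (by positivity) (N / 3)) (N + 1)
  simp only [Int.cast_natCast] at hsplit
  rw [hsplit, add_sub_cancel_left, abs_of_nonneg (by positivity)]
  linarith

theorem statement7 :
    ∃ C > (0 : ℝ), ∀ N : ℕ, 1 ≤ N →
      |(∑ n ∈ Finset.range (N + 1),
          3 / Real.sqrt (Real.pi * N) * Real.exp (-(9 / N) * ((n : ℝ) - N / 3) ^ 2)) - 1|
        ≤ C / N := by
  refine ⟨16, by norm_num, fun N hN => ?_⟩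
  have hN' : (1 : ℝ) ≤ N := by exact_mod_cast hN
  set c := (√(π / (9 / N)))⁻¹ with hc_def
  set S := ∑' n : ℤ, rexp (-(9 / N) * (n - N / 3) ^ 2)
  set F := ∑ n ∈ Finset.range (N + 1), rexp (-(9 / N) * ((n : ℝ) - N / 3) ^ 2)
  have hc : 3 / √(π * N) = c := by
    rw [hc_def, div_div_eq_mul_div, sqrt_div' _ (by norm_num), show (9 : ℝ) = 3 ^ 2 by norm_num,
      sqrt_sq (by norm_num), inv_div]
  have hc₀ : 0 ≤ c := inv_nonneg.mpr (sqrt_nonneg _)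
  have hc₃ : c ≤ 3 := hc ▸ div_le_self (by norm_num) (one_le_sqrt.mpr (by nlinarith [pi_gt_three]))
  have htail : |S - F| ≤ 4 * rexp (-N) := abs_tsum_sub_sum_range_exp_le (by omega)
  have hπ : (9 : ℝ) ≤ π ^ 2 := by nlinarith [pi_gt_three]
  have htheta : |c * S - 1| ≤ 4 * rexp (-N) :=
    abs_inv_sqrt_mul_tsum_exp_neg_mul_sub_sq_sub_one_le (by positivity) hN' (by
      rw [div_div_eq_mul_div, le_div_iff₀ (by norm_num)]; nlinarith)
  have hexp : rexp (-N) ≤ (N : ℝ)⁻¹ := by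
    rw [Real.exp_neg]; exact inv_anti₀ (by positivity) (by linarith [add_one_le_exp (N : ℝ)])
  rw [← Finset.mul_sum, hc]
  calc |c * F - 1| = |c * (F - S) + (c * S - 1)| := by ring_nf
    _ ≤ c * |S - F| + |c * S - 1| :=
        (abs_add_le _ _).trans_eq (by rw [abs_mul, abs_of_nonneg hc₀, abs_sub_comm])
    _ ≤ 3 * (4 * rexp (-N)) + 4 * rexp (-N) := by gcongr
    _ ≤ 16 / N := by rw [div_eq_mul_inv]; linarith
end
end

section
/- There exist a constant $C > 0$ and $N_0$ such that for all $N \ge N_0$ and all integers $m, n$ with $1 \le m \le n$, $2m < \sqrt{6N\log N}$ and $|2n - 2N/3| < \sqrt{2N\log N}$, writing $\tilde n = n - N/3$, one has $P(D_N = 2m,\ T_N = 2n) = \frac{3^{3/2}}{2\pi N} \exp\Big\{ -\frac{3(3\tilde n^2 + m^2)}{N} - \frac{9(\tilde n^3 - \tilde n m^2)}{N^2} + r_{N,m,n} \Big\}$ where $|r_{N,m,n}| \le C\big(\frac{1}{N} + \frac{\tilde n^4 + m^4}{N^3}\big)$. -/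
open MeasureTheory ProbabilityTheory Filter

noncomputable section

/-!
On the event `{D_N = 2m, T_N = 2n}` exactly `n + m` of the `X_i` equal `1` and `n - m` equal `-1`,
so its probability is the trinomial weight `N! / (a! b! c!) · 3⁻ᴺ` with cells
`a, b, c = N/3 + δ` for `δ ∈ {x + m, x - m, -2x}`, `x = n - N/3`. Stirling's formula, with Robbins'
error `1/(12k)`, turns its logarithm into `log (3^{3/2} / (2πN)) - ∑ (k + 1/2) log (3k/N)`, and the
third-order Taylor expansion of `(1 + u) log (1 + u)` at `u = 3δ/N` produces the quadratic and
cubic terms of the exponent. In the window `|δ| ≤ N/6`, which the hypotheses force once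
`N ≥ 288²`, every remainder is `O(1/N + ∑ δ⁴/N³)`.
-/

open Real Finset
open scoped Nat ENNReal Topology

lemma abs_log_one_add_sub_taylor_le {u : ℝ} (hu : |u| ≤ 1 / 2) (n : ℕ) :
    |log (1 + u) - ∑ i ∈ range n, (-1) ^ i * u ^ (i + 1) / (i + 1)| ≤ 2 * |u| ^ (n + 1) := by
  have h := abs_log_sub_add_sum_range_le (x := -u) (by rw [abs_neg]; linarith) n
  rw [abs_neg, sub_neg_eq_add, add_comm 1 u] at h
  have hsum : ∑ i ∈ range n, (-u) ^ (i + 1) / (i + 1)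
      = -∑ i ∈ range n, (-1) ^ i * u ^ (i + 1) / (i + 1) := by
    rw [← sum_neg_distrib]
    refine sum_congr rfl fun i _ => ?_
    rw [neg_pow, pow_succ]
    ring
  rw [hsum, neg_add_eq_sub, add_comm u 1] at h
  calc _ ≤ |u| ^ (n + 1) / (1 - |u|) := h
    _ ≤ |u| ^ (n + 1) / (1 / 2) := by gcongr; linarith
    _ = 2 * |u| ^ (n + 1) := by ring

lemma abs_log_one_add_sub_le {u : ℝ} (hu : |u| ≤ 1 / 2) : |log (1 + u) - u| ≤ 2 * u ^ 2 := by
  simpa [sq_abs] using abs_log_one_add_sub_taylor_le hu 1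

lemma abs_one_add_mul_log_one_add_sub_le {u : ℝ} (hu : |u| ≤ 1 / 2) :
    |(1 + u) * log (1 + u) - (u + u ^ 2 / 2 - u ^ 3 / 6)| ≤ 4 * u ^ 4 := by
  have htaylor := abs_log_one_add_sub_taylor_le hu 3
  norm_num [sum_range_succ] at htaylor
  rw [neg_div, ← sub_eq_add_neg, Even.pow_abs (by decide)] at htaylor
  have h1 : |1 + u| ≤ 3 / 2 := by rw [abs_le] at hu ⊢; constructor <;> linarith
  calc _ = |(1 + u) * (log (1 + u) - (u - u ^ 2 / 2 + u ^ 3 / 3)) + u ^ 4 / 3| := by ring_nf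
    _ ≤ |1 + u| * |log (1 + u) - (u - u ^ 2 / 2 + u ^ 3 / 3)| + u ^ 4 / 3 := by
      grw [abs_add_le, abs_mul, abs_of_nonneg (by positivity : 0 ≤ u ^ 4 / 3)]
    _ ≤ 3 / 2 * (2 * u ^ 4) + u ^ 4 / 3 := by gcongr
    _ ≤ 4 * u ^ 4 := by nlinarith [sq_nonneg (u ^ 2)]

lemma abs_add_half_mul_log_sub_le {R δ : ℝ} (hR : 0 < R) (hδ : |δ| ≤ R / 6) :
    |(R / 3 + δ + 1 / 2) * log (1 + 3 * δ / R)
        - (δ + 3 * δ / (2 * R) + 3 * δ ^ 2 / (2 * R) - 3 * δ ^ 3 / (2 * R ^ 2))|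
      ≤ 108 * δ ^ 4 / R ^ 3 + 9 * δ ^ 2 / R ^ 2 := by
  set u := 3 * δ / R with hu
  have hu_le : |u| ≤ 1 / 2 := by
    rw [hu, abs_div, abs_mul, abs_of_pos hR, div_le_iff₀ hR]; norm_num; linarith
  have hδ_eq : δ = R * u / 3 := by rw [hu]; field_simp
  rw [hδ_eq]
  calc _ = |R / 3 * ((1 + u) * log (1 + u) - (u + u ^ 2 / 2 - u ^ 3 / 6))
        + 1 / 2 * (log (1 + u) - u)| := by congr 1; field_simp; ring
    _ ≤ R / 3 * (4 * u ^ 4) + 1 / 2 * (2 * u ^ 2) := by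
      grw [abs_add_le, abs_mul, abs_mul, abs_of_pos (by positivity : 0 < R / 3),
        abs_of_pos (by norm_num : (0 : ℝ) < 1 / 2), abs_one_add_mul_log_one_add_sub_le hu_le,
        abs_log_one_add_sub_le hu_le]
    _ = _ := by field_simp; ring

namespace Stirling

lemma log_stirlingSeq_sub_log_sqrt_pi_le {n : ℕ} (hn : n ≠ 0) :
    log (stirlingSeq n) - log √π ≤ 1 / (12 * n) := by
  have htel (M : ℕ) : log (stirlingSeq n) - log (stirlingSeq (n + M))
      ≤ 1 / (12 * n) - 1 / (12 * (n + M : ℕ)) := by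
    let f (k : ℕ) : ℝ := log (stirlingSeq (n + k))
    let g (k : ℕ) : ℝ := 1 / (12 * (n + k : ℕ))
    have hstep (k : ℕ) (_ : k ∈ range M) : f k - f (k + 1) ≤ g k - g (k + 1) := by
      simp only [f, g, ← add_assoc]
      grw [log_stirlingSeq_sdiff_le]
      have : (0 : ℝ) < n := by positivity
      push_cast
      field_simp
      linarith
    have h := sum_le_sum hstep
    rw [sum_range_sub', sum_range_sub'] at h
    simpa [f, g] using h
  have hlim : Tendsto (fun M => log (stirlingSeq n) - log (stirlingSeq (n + M)))
      atTop (𝓝 (log (stirlingSeq n) - log √π)) := by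
    refine tendsto_const_nhds.sub ((continuousAt_log (by positivity)).tendsto.comp ?_)
    exact tendsto_stirlingSeq_sqrt_pi.comp (tendsto_atTop_atTop_of_monotone
      (fun _ _ h => by omega) fun k => ⟨k, by omega⟩)
  refine le_of_tendsto' hlim fun M => (htel M).trans ?_
  simp only [sub_le_self_iff]
  positivity

lemma abs_log_factorial_sub_le {n : ℕ} (hn : n ≠ 0) :
    |log n ! - (n * log n - n + log (2 * π * n) / 2)| ≤ 1 / (12 * n) := by
  have hpos : (0 : ℝ) < n := by positivity
  have heq : log n ! - (n * log n - n + log (2 * π * n) / 2)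
      = log (stirlingSeq n) - log √π := by
    rw [log_stirlingSeq_formula, log_div hpos.ne' (exp_ne_zero 1), log_exp, log_sqrt pi_pos.le,
      log_mul (by positivity) hpos.ne', log_mul (by positivity) pi_pos.ne',
      log_mul two_ne_zero hpos.ne']
    ring
  rw [heq, abs_of_nonneg (sub_nonneg.2 (log_le_log (by positivity) (sqrt_pi_le_stirlingSeq hn)))]
  exact log_stirlingSeq_sub_log_sqrt_pi_le hn

end Stirling

section UniformFinite

variable {Ω α : Type*} [MeasurableSpace Ω] [MeasurableSpace α] [MeasurableSingletonClass α]
  {μ : Measure Ω} {X : ℕ → Ω → α} {s : Finset α} {p : ℝ≥0∞}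

lemma measure_preimage_finset_eq_card_mul_pow (hmeas : ∀ i, Measurable (X i))
    (hindep : iIndepFun X μ) (hp : ∀ i, ∀ x ∈ s, μ (X i ⁻¹' {x}) = p) {N : ℕ}
    {S : Finset (Fin N → α)} (hS : S ⊆ Fintype.piFinset fun _ => s) :
    μ ((fun ω (i : Fin N) => X i ω) ⁻¹' S) = #S * p ^ N := by
  have hfiber (f : Fin N → α) :
      (fun ω (i : Fin N) => X i ω) ⁻¹' {f} = ⋂ i : Fin N, X i ⁻¹' {f i} := by
    ext ω; simp [funext_iff]
  rw [← sum_measure_preimage_singleton S fun f _ => by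
    rw [hfiber]; exact .iInter fun i => hmeas i (measurableSet_singleton _)]
  rw [← nsmul_eq_mul, ← sum_const]
  refine sum_congr rfl fun f hf => ?_
  rw [hfiber, (hindep.precomp Fin.val_injective).meas_iInter
    fun i => ⟨{f i}, measurableSet_singleton _, rfl⟩]
  rw [prod_congr rfl fun (i : Fin N) _ => hp i (f i) (Fintype.mem_piFinset.1 (hS hf) i)]
  simp

lemma ae_mem_of_sum_measure_preimage_singleton [IsProbabilityMeasure μ] {Y : Ω → α}
    (hY : Measurable Y) (h : ∑ x ∈ s, μ (Y ⁻¹' {x}) = 1) : ∀ᵐ ω ∂μ, Y ω ∈ s := by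
  rw [sum_measure_preimage_singleton s fun x _ => hY (measurableSet_singleton x)] at h
  exact (ae_mem_iff_measure_eq (hY s.measurableSet).nullMeasurableSet).2 (by simpa using h)

end UniformFinite

section Counting

variable {N : ℕ}

local notation "signs" => Fintype.piFinset fun _ : Fin N => ({-1, 0, 1} : Finset ℝ)

lemma sum_eq_sub_and_sum_sq_eq_add {f : Fin N → ℝ} (hf : f ∈ signs) :
    ∑ i, f i = (#{i | f i = 1} : ℝ) - #{i | f i = -1} ∧
      ∑ i, f i ^ 2 = (#{i | f i = 1} : ℝ) + #{i | f i = -1} := by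
  have hval (i : Fin N) : f i = -1 ∨ f i = 0 ∨ f i = 1 := by
    simpa using Fintype.mem_piFinset.1 hf i
  simp only [card_filter, Nat.cast_sum, Nat.cast_ite, Nat.cast_one, Nat.cast_zero,
    ← sum_sub_distrib, ← sum_add_distrib]
  constructor <;> refine sum_congr rfl fun i _ => ?_ <;>
    rcases hval i with h | h | h <;> norm_num [h]

lemma card_signs_filter_sum_eq_sub_sum_sq_eq_add (p q : ℕ) :
    #{f ∈ signs | ∑ i, f i = (p : ℝ) - q ∧ ∑ i, f i ^ 2 = (p : ℝ) + q}
      = N.choose p * (N - p).choose q := by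
  have hcond : ∀ f ∈ signs, (∑ i, f i = (p : ℝ) - q ∧ ∑ i, f i ^ 2 = (p : ℝ) + q) ↔
      (#{i | f i = 1} = p ∧ #{i | f i = -1} = q) := by
    intro f hf
    obtain ⟨h1, h2⟩ := sum_eq_sub_and_sum_sq_eq_add hf
    rw [h1, h2]
    constructor
    · rintro ⟨e1, e2⟩
      exact ⟨by exact_mod_cast (by linarith : (#{i | f i = 1} : ℝ) = p),
        by exact_mod_cast (by linarith : (#{i | f i = -1} : ℝ) = q)⟩
    · rintro ⟨e1, e2⟩
      simp [e1, e2]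
  rw [filter_congr hcond]
  let T := (univ.powersetCard p).sigma fun P : Finset (Fin N) => (univ \ P).powersetCard q
  have hT : #T = N.choose p * (N - p).choose q := by
    rw [card_sigma, sum_congr rfl fun P hP => by
      rw [card_powersetCard, card_sdiff_of_subset (subset_univ P), (mem_powersetCard.1 hP).2,
        card_univ, Fintype.card_fin]]
    simp
  rw [← hT]
  refine card_nbij' (fun f => ⟨({i | f i = 1} : Finset _), ({i | f i = -1} : Finset _)⟩)
    (fun PQ i => if i ∈ PQ.1 then 1 else if i ∈ PQ.2 then -1 else 0) ?_ ?_ ?_ ?_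
  · intro f hf
    simp only [coe_filter, Set.mem_ofPred_eq] at hf
    simp only [T, coe_sigma, Set.mem_sigma_iff, mem_coe, mem_powersetCard, subset_univ, true_and]
    refine ⟨hf.2.1, fun i hi => ?_, hf.2.2⟩
    simp only [mem_filter, mem_univ, true_and] at hi ⊢
    norm_num [hi]
  · rintro ⟨P, Q⟩ hPQ
    simp only [T, coe_sigma, Set.mem_sigma_iff, mem_coe, mem_powersetCard, subset_univ,
      true_and] at hPQ
    obtain ⟨hP, hQP, hQ⟩ := hPQ
    have hdisj : ∀ i ∈ Q, i ∉ P := fun i hi => (mem_sdiff.1 (hQP hi)).2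
    simp only [coe_filter, Set.mem_ofPred_eq, Fintype.mem_piFinset]
    refine ⟨fun i => by split_ifs <;> simp, ?_, ?_⟩
    · convert hP using 2
      ext i
      by_cases hi : i ∈ P <;> simp [hi]
      split_ifs <;> norm_num
    · convert hQ using 2
      ext i
      by_cases hi : i ∈ Q <;> simp [hi, hdisj]
      split_ifs <;> norm_num
  · intro f hf
    simp only [coe_filter, Set.mem_ofPred_eq, Fintype.mem_piFinset] at hf
    funext i
    rcases (by simpa using hf.1 i : f i = -1 ∨ f i = 0 ∨ f i = 1) with h | h | h <;>
      norm_num [h]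
  · rintro ⟨P, Q⟩ hPQ
    simp only [T, coe_sigma, Set.mem_sigma_iff, mem_coe, mem_powersetCard, subset_univ,
      true_and] at hPQ
    have hdisj : ∀ i ∈ Q, i ∉ P := fun i hi => (mem_sdiff.1 (hPQ.2.1 hi)).2
    simp only [Sigma.mk.injEq, heq_eq_eq]
    constructor <;> ext i <;> by_cases hP : i ∈ P <;> by_cases hQ : i ∈ Q <;> norm_num [*]

end Counting

lemma measure_DN_TN_eq {Ω : Type*} [MeasurableSpace Ω] {μ : Measure Ω} [IsProbabilityMeasure μ]
    {X : ℕ → Ω → ℝ} (hmeas : ∀ i, Measurable (X i)) (hindep : iIndepFun X μ)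
    (hdist : ∀ i, μ {ω | X i ω = -1} = 1/3 ∧ μ {ω | X i ω = 0} = 1/3 ∧ μ {ω | X i ω = 1} = 1/3)
    {N m n : ℕ} (hmn : m ≤ n) :
    μ {ω | DN X N ω = 2 * (m : ℝ) ∧ TN X N ω = 2 * (n : ℝ)}
      = ((N.choose (n + m) * (N - (n + m)).choose (n - m) : ℕ) : ℝ≥0∞) * (1 / 3) ^ N := by
  have hp (i : ℕ) : ∀ x ∈ ({-1, 0, 1} : Finset ℝ), μ (X i ⁻¹' {x}) = 1 / 3 := by
    simpa [Set.preimage, Set.mem_singleton_iff] using hdist i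
  have hae : ∀ᵐ ω ∂μ, ∀ i, X i ω ∈ ({-1, 0, 1} : Finset ℝ) := by
    refine ae_all_iff.2 fun i => ae_mem_of_sum_measure_preimage_singleton (hmeas i) ?_
    rw [sum_congr rfl (hp i)]
    simp only [sum_const]
    norm_num [ENNReal.mul_inv_cancel]
  have h1 : ((n + m : ℕ) : ℝ) - (n - m : ℕ) = 2 * m := by push_cast [hmn]; ring
  have h2 : ((n + m : ℕ) : ℝ) + (n - m : ℕ) = 2 * n := by push_cast [hmn]; ring
  rw [← card_signs_filter_sum_eq_sub_sum_sq_eq_add, h1, h2,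
    ← measure_preimage_finset_eq_card_mul_pow hmeas hindep hp (filter_subset _ _)]
  refine measure_congr (eventuallyEq_set.2 ?_)
  filter_upwards [hae] with ω hω
  simp only [Set.mem_ofPred_eq, Set.mem_preimage, coe_filter, Fintype.mem_piFinset, DN, TN,
    Fin.sum_univ_eq_sum_range (fun i => X i ω), Fin.sum_univ_eq_sum_range (fun i => X i ω ^ 2)]
  exact ⟨fun h => ⟨fun i => hω i, h⟩, And.right⟩

lemma Nat.choose_mul_choose_mul_factorial {N a b c : ℕ} (habc : a + b + c = N) :
    N.choose a * (N - a).choose b * (a ! * b ! * c !) = N ! := by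
  have hNa : N - a = b + c := by omega
  rw [hNa, ← Nat.choose_mul_factorial_mul_factorial (show a ≤ N by omega), hNa,
    ← Nat.add_choose_mul_factorial_mul_factorial b c, Nat.choose_symm_add]
  ring

lemma abs_log_trinomial_sub_stirling_le {N a b c : ℕ} (habc : a + b + c = N) (ha : a ≠ 0)
    (hb : b ≠ 0) (hc : c ≠ 0) :
    |log ((N.choose a * (N - a).choose b : ℕ) * (1 / 3 : ℝ) ^ N)
        - (3 / 2 * log 3 - log (2 * π * N) - ((a + 1 / 2) * log (3 * a / N)
          + (b + 1 / 2) * log (3 * b / N) + (c + 1 / 2) * log (3 * c / N)))|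
      ≤ 1 / (12 * N) + 1 / (12 * a) + 1 / (12 * b) + 1 / (12 * c) := by
  have hN : N ≠ 0 := by omega
  have hK : ((N.choose a * (N - a).choose b : ℕ) : ℝ) = N ! / (a ! * b ! * c !) := by
    rw [eq_div_iff (by positivity)]
    exact_mod_cast Nat.choose_mul_choose_mul_factorial habc
  have hlog3 (k : ℕ) (hk : k ≠ 0) : log (3 * k / N) = log 3 + log k - log N := by
    rw [log_div (by positivity) (by positivity), log_mul (by norm_num) (by positivity)]
  have hlog2π (k : ℕ) (hk : k ≠ 0) : log (2 * π * k) = log (2 * π) + log k :=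
    log_mul (by positivity) (by positivity)
  have key : log ((N.choose a * (N - a).choose b : ℕ) * (1 / 3 : ℝ) ^ N)
        - (3 / 2 * log 3 - log (2 * π * N) - ((a + 1 / 2) * log (3 * a / N)
          + (b + 1 / 2) * log (3 * b / N) + (c + 1 / 2) * log (3 * c / N)))
      = (log N ! - (N * log N - N + log (2 * π * N) / 2))
        - (log a ! - (a * log a - a + log (2 * π * a) / 2))
        - (log b ! - (b * log b - b + log (2 * π * b) / 2))
        - (log c ! - (c * log c - c + log (2 * π * c) / 2)) := by
    rw [hK, log_mul (by positivity) (by positivity), log_div (by positivity) (by positivity),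
      log_mul (by positivity) (by positivity), log_mul (by positivity) (by positivity), log_pow,
      one_div, log_inv, hlog3 a ha, hlog3 b hb, hlog3 c hc, hlog2π N hN, hlog2π a ha,
      hlog2π b hb, hlog2π c hc]
    subst habc
    push_cast
    ring
  have eN := abs_le.1 (Stirling.abs_log_factorial_sub_le hN)
  have ea := abs_le.1 (Stirling.abs_log_factorial_sub_le ha)
  have eb := abs_le.1 (Stirling.abs_log_factorial_sub_le hb)
  have ec := abs_le.1 (Stirling.abs_log_factorial_sub_le hc)
  rw [key, abs_le]
  constructor <;> linarith

lemma abs_log_trinomial_sub_le {N a b c : ℕ} (habc : a + b + c = N) (hN : 0 < N)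
    {δ₁ δ₂ δ₃ : ℝ} (h₁ : (a : ℝ) = N / 3 + δ₁) (h₂ : (b : ℝ) = N / 3 + δ₂)
    (h₃ : (c : ℝ) = N / 3 + δ₃) (hδ₁ : |δ₁| ≤ N / 6) (hδ₂ : |δ₂| ≤ N / 6) (hδ₃ : |δ₃| ≤ N / 6) :
    |log ((N.choose a * (N - a).choose b : ℕ) * (1 / 3 : ℝ) ^ N)
        - (3 / 2 * log 3 - log (2 * π * N)
          - (3 * (δ₁ ^ 2 + δ₂ ^ 2 + δ₃ ^ 2) / (2 * N)
            - 3 * (δ₁ ^ 3 + δ₂ ^ 3 + δ₃ ^ 3) / (2 * N ^ 2)))|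
      ≤ 2 / N + 108 * (δ₁ ^ 4 + δ₂ ^ 4 + δ₃ ^ 4) / N ^ 3
        + 9 * (δ₁ ^ 2 + δ₂ ^ 2 + δ₃ ^ 2) / N ^ 2 := by
  have hR : (0 : ℝ) < N := by exact_mod_cast hN
  have hsum : δ₁ + δ₂ + δ₃ = 0 := by
    have : (a : ℝ) + b + c = N := by exact_mod_cast habc
    linarith
  have hcell {k : ℕ} {δ : ℝ} (hk : (k : ℝ) = N / 3 + δ) (hδ : |δ| ≤ N / 6) :
      k ≠ 0 ∧ N / 6 ≤ (k : ℝ) ∧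
        (k + 1 / 2) * log (3 * k / N) = (N / 3 + δ + 1 / 2) * log (1 + 3 * δ / N) := by
    have hk6 : N / 6 ≤ (k : ℝ) := by linarith [(abs_le.1 hδ).1]
    exact ⟨by rintro rfl; simp at hk6; linarith, hk6, by rw [hk]; congr 2; field_simp⟩
  obtain ⟨ha0, ha, ea⟩ := hcell h₁ hδ₁
  obtain ⟨hb0, hb, eb⟩ := hcell h₂ hδ₂
  obtain ⟨hc0, hc, ec⟩ := hcell h₃ hδ₃
  have hstir := abs_log_trinomial_sub_stirling_le habc ha0 hb0 hc0
  rw [ea, eb, ec] at hstir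
  have hinv {k : ℝ} (hk : N / 6 ≤ k) : 1 / (12 * k) ≤ 1 / (2 * N) := by
    rw [div_le_div_iff₀ (by linarith) (by positivity)]; linarith
  have hstir_le : 1 / (12 * (N : ℝ)) + 1 / (12 * a) + 1 / (12 * b) + 1 / (12 * c) ≤ 2 / N := by
    grw [hinv ha, hinv hb, hinv hc]
    field_simp
    norm_num
  have t₁ := abs_le.1 (abs_add_half_mul_log_sub_le hR hδ₁)
  have t₂ := abs_le.1 (abs_add_half_mul_log_sub_le hR hδ₂)
  have t₃ := abs_le.1 (abs_add_half_mul_log_sub_le hR hδ₃)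
  have hs := abs_le.1 hstir
  -- the first-order terms cancel because the cells add up to `N`
  have hlin :
      δ₁ + 3 * δ₁ / (2 * N) + (δ₂ + 3 * δ₂ / (2 * N)) + (δ₃ + 3 * δ₃ / (2 * N)) = 0 := by
    field_simp
    linear_combination (2 * N + 3) * hsum
  have e₂ : 3 * (δ₁ ^ 2 + δ₂ ^ 2 + δ₃ ^ 2) / (2 * N)
      = 3 * δ₁ ^ 2 / (2 * N) + 3 * δ₂ ^ 2 / (2 * N) + 3 * δ₃ ^ 2 / (2 * N) := by ring
  have e₃ : 3 * (δ₁ ^ 3 + δ₂ ^ 3 + δ₃ ^ 3) / (2 * N ^ 2)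
      = 3 * δ₁ ^ 3 / (2 * N ^ 2) + 3 * δ₂ ^ 3 / (2 * N ^ 2) + 3 * δ₃ ^ 3 / (2 * N ^ 2) := by ring
  have e₄ : 108 * (δ₁ ^ 4 + δ₂ ^ 4 + δ₃ ^ 4) / N ^ 3
      = 108 * δ₁ ^ 4 / N ^ 3 + 108 * δ₂ ^ 4 / N ^ 3 + 108 * δ₃ ^ 4 / N ^ 3 := by ring
  have e₅ : 9 * (δ₁ ^ 2 + δ₂ ^ 2 + δ₃ ^ 2) / N ^ 2
      = 9 * δ₁ ^ 2 / N ^ 2 + 9 * δ₂ ^ 2 / N ^ 2 + 9 * δ₃ ^ 2 / N ^ 2 := by ring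
  rw [abs_le]
  constructor <;> linarith

lemma log_le_div_144_of_le {x : ℝ} (hx : 82944 ≤ x) : log x ≤ x / 144 := by
  have hlog : log x ≤ 2 * √x := by
    simpa [sqrt_eq_rpow, div_eq_mul_inv, mul_comm] using
      log_le_rpow_div (x := x) (by linarith) (by norm_num : (0 : ℝ) < 1 / 2)
  have hsqrt : 288 ≤ √x := (le_sqrt (by norm_num) (by linarith)).2 (by linarith)
  nlinarith [sq_sqrt (by linarith : (0 : ℝ) ≤ x)]

lemma bounds_of_lt_sqrt_mul_log {N m n : ℕ} (hN : 82944 ≤ N)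
    (hm : (2 * m : ℝ) < √(6 * N * log N)) (hn : |(2 * n : ℝ) - 2 * N / 3| < √(2 * N * log N)) :
    (m : ℝ) ≤ 5 * N / 48 ∧ |(n : ℝ) - N / 3| ≤ N / 16 := by
  have hN' : (82944 : ℝ) ≤ N := by exact_mod_cast hN
  have hlog : N * log N ≤ N ^ 2 / 144 := by
    nlinarith [log_le_div_144_of_le hN']
  rw [lt_sqrt (by positivity)] at hm
  rw [lt_sqrt (abs_nonneg _), sq_abs] at hn
  constructor
  · nlinarith [(m.cast_nonneg : (0 : ℝ) ≤ m)]
  · rw [← sq_le_sq₀ (abs_nonneg _) (by positivity), sq_abs]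
    nlinarith

lemma trinomial_error_le {R x y : ℝ} (hR : 0 < R) :
    2 / R + 108 * ((x + y) ^ 4 + (x - y) ^ 4 + (-2 * x) ^ 4) / R ^ 3
        + 9 * ((x + y) ^ 2 + (x - y) ^ 2 + (-2 * x) ^ 2) / R ^ 2
      ≤ 3000 * (1 / R + (x ^ 4 + y ^ 4) / R ^ 3) := by
  field_simp
  -- `2 x² R ≤ R² + x⁴` absorbs the quadratic terms into `1/R + x⁴/R³`
  nlinarith [sq_nonneg (x ^ 2 - R), sq_nonneg (y ^ 2 - R), sq_nonneg (x * y),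
    sq_nonneg (x ^ 2 - y ^ 2), sq_nonneg x, sq_nonneg y, mul_pos hR hR]

lemma exists_eq_mul_exp_of_abs_log_sub_le {P c Q B : ℝ} (hP : 0 < P) (hc : 0 < c)
    (h : |log P - (log c + Q)| ≤ B) : ∃ r, |r| ≤ B ∧ P = c * exp (Q + r) := by
  refine ⟨log P - (log c + Q), h, ?_⟩
  rw [show Q + (log P - (log c + Q)) = log P - log c by ring, exp_sub, exp_log hP, exp_log hc]
  field_simp

lemma exists_trinomial_eq_mul_exp {N m n : ℕ} (hN : 82944 ≤ N) (hmn : m ≤ n)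
    (hm : (2 * m : ℝ) < √(6 * N * log N)) (hn : |(2 * n : ℝ) - 2 * N / 3| < √(2 * N * log N)) :
    ∃ r : ℝ, |r| ≤ 3000 * (1 / N + (((n : ℝ) - N / 3) ^ 4 + (m : ℝ) ^ 4) / N ^ 3) ∧
      ((N.choose (n + m) * (N - (n + m)).choose (n - m) : ℕ) : ℝ) * (1 / 3) ^ N =
        3 ^ ((3 : ℝ) / 2) / (2 * π * N) *
          exp (-(3 * (3 * ((n : ℝ) - N / 3) ^ 2 + (m : ℝ) ^ 2)) / N
            - 9 * (((n : ℝ) - N / 3) ^ 3 - ((n : ℝ) - N / 3) * (m : ℝ) ^ 2) / N ^ 2 + r) := by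
  obtain ⟨hy, hx⟩ := bounds_of_lt_sqrt_mul_log hN hm hn
  have hR : (0 : ℝ) < N := by positivity
  have hy0 : (0 : ℝ) ≤ m := m.cast_nonneg
  set x := (n : ℝ) - N / 3 with hxdef
  have hx' := abs_le.1 hx
  have h2n : 2 * n ≤ N := by exact_mod_cast (by linarith : (2 * n : ℝ) ≤ N)
  have hlog := abs_log_trinomial_sub_le (N := N) (a := n + m) (b := n - m) (c := N - 2 * n)
    (δ₁ := x + m) (δ₂ := x - m) (δ₃ := -2 * x) (by omega) (by omega) (by push_cast; ring)
    (by push_cast [hmn]; ring) (by push_cast [h2n]; ring) (abs_le.2 ⟨by linarith, by linarith⟩)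
    (abs_le.2 ⟨by linarith, by linarith⟩) (abs_le.2 ⟨by linarith, by linarith⟩)
  have hchoose : 0 < N.choose (n + m) * (N - (n + m)).choose (n - m) :=
    Nat.mul_pos (Nat.choose_pos (by omega)) (Nat.choose_pos (by omega))
  refine exists_eq_mul_exp_of_abs_log_sub_le (by positivity) (by positivity) ?_
  rw [log_div (by positivity) (by positivity), log_rpow (by norm_num)]
  refine (le_of_eq ?_).trans (hlog.trans (trinomial_error_le hR))
  congr 2
  ring

theorem statement12 {Ω : Type*} [MeasurableSpace Ω] (μ : Measure Ω) [IsProbabilityMeasure μ]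
    (X : ℕ → Ω → ℝ) (hmeas : ∀ i, Measurable (X i))
    (hindep : iIndepFun X μ)
    (hdist : ∀ i, μ {ω | X i ω = -1} = 1/3 ∧ μ {ω | X i ω = 0} = 1/3 ∧ μ {ω | X i ω = 1} = 1/3) :
    ∃ C > (0 : ℝ), ∃ N₀ : ℕ, ∀ N : ℕ, N₀ ≤ N → ∀ m n : ℕ, 1 ≤ m → m ≤ n →
      (2 * m : ℝ) < Real.sqrt (6 * N * Real.log N) →
      |(2 * n : ℝ) - 2 * N / 3| < Real.sqrt (2 * N * Real.log N) →
      ∃ r : ℝ, |r| ≤ C * (1 / N + (((n : ℝ) - N / 3) ^ 4 + (m : ℝ) ^ 4) / N ^ 3) ∧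
        (μ {ω | DN X N ω = 2 * (m : ℝ) ∧ TN X N ω = 2 * (n : ℝ)}).toReal =
          3 ^ ((3 : ℝ) / 2) / (2 * Real.pi * N) *
            Real.exp (-(3 * (3 * ((n : ℝ) - N / 3) ^ 2 + (m : ℝ) ^ 2)) / N
              - 9 * (((n : ℝ) - N / 3) ^ 3 - ((n : ℝ) - N / 3) * (m : ℝ) ^ 2) / N ^ 2 + r) := by
  refine ⟨3000, by norm_num, 82944, fun N hN m n _ hmn hm hn => ?_⟩
  obtain ⟨r, hr, heq⟩ := exists_trinomial_eq_mul_exp hN hmn hm hn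
  refine ⟨r, hr, ?_⟩
  rw [measure_DN_TN_eq hmeas hindep hdist hmn, ← heq]
  simp
end
end

section
/- For every $\epsilon > 0$ there exists a constant $C > 0$ such that for all $N \ge 1$ and all $w \ge \epsilon$, the jump of $\Psi_N$ at $w$ satisfies $0 \le \Psi_N(w) - \Psi_N(w-) \le C/N$; moreover $\Psi_N$ is discontinuous at $w > 0$ only if $w\sqrt{2n}$ is a nonzero integer for some integer $1 \le n \le N$. -/
open MeasureTheory ProbabilityTheory Filter

noncomputable section

/-- The standard normal density `φ`. -/
def stdPhi (x : ℝ) : ℝ := Real.exp (-x ^ 2 / 2) / Real.sqrt (2 * Real.pi)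

/-- The standard normal distribution function `Φ`. -/
def stdCDF (x : ℝ) : ℝ := ∫ t in Set.Iic x, stdPhi t

/-- The oscillatory term `Λ_N(w)`. -/
def Lambda (N : ℕ) (w : ℝ) : ℝ :=
  -Real.sqrt (3 / 2) * stdPhi w *
    ∑ n ∈ Finset.range (N + 1),
      3 / Real.sqrt (Real.pi * N) * Real.exp (-(9 / N) * ((n : ℝ) - N / 3) ^ 2) *
        (Int.fract (w * Real.sqrt (2 * n)) - 1 / 2)

/-- The expansion `Ψ_N`: for `w ≥ 0` it is `Φ(w) + N^{-1/2} Λ_N(w)`, and for `w > 0` one sets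
`Ψ_N(-w) = 1 - Ψ_N(w-)`, where `Ψ_N(w-)` denotes the left limit at `w`. -/
def Psi (N : ℕ) (w : ℝ) : ℝ :=
  if 0 ≤ w then stdCDF w + Lambda N w / Real.sqrt N
  else 1 - Function.leftLim (fun x ↦ stdCDF x + Lambda N x / Real.sqrt N) (-w)

/-!
On `w > 0` the function `Ψ_N` is `Φ + N^{-1/2} Λ_N`, and the only discontinuities come from the
fractional parts `frac(x √(2n))`, each of which drops by `1` at the points where `w √(2n)` is a
nonzero integer. Hence the jump at `w` is `√(3/2) φ(w) N^{-1/2}` times the sum of the Gaussian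
weights `3 (π N)^{-1/2} e^{-9(n - N/3)²/N}` over these `n`. Writing `k = w √(2n)`, the exponent
dominates `c (k - t)²` with `c = 3/(2w²)` and `t² = 2w²N/3`; since distinct `n` give distinct
integers `k`, the sum of the weights is `O((1 + w²) N^{-1/2})`, and `φ(w) (1 + w²)` is bounded.
-/

open Topology
open scoped Classical

lemma sum_pow_le_of_injOn {ι : Type*} {s : Finset ι} {g : ι → ℕ} (hg : Set.InjOn g s)
    {r : ℝ} (hr0 : 0 ≤ r) (hr1 : r < 1) :
    ∑ i ∈ s, r ^ g i ≤ (1 - r)⁻¹ := by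
  rw [← Finset.sum_image hg, ← tsum_geometric_of_lt_one hr0 hr1]
  exact (summable_geometric_of_lt_one hr0 hr1).sum_le_tsum _ fun i _ ↦ by positivity

lemma exp_neg_mul_sq_le_pow {c x : ℝ} (hc : 0 ≤ c) {m : ℕ} (hm : (m : ℝ) ≤ |x|) :
    Real.exp (-c * x ^ 2) ≤ Real.exp (-c) ^ m := by
  rw [← Real.exp_nat_mul, Real.exp_le_exp]
  have hm2 : (m : ℝ) ^ 2 ≤ x ^ 2 := by
    rw [← sq_abs x]
    exact pow_le_pow_left₀ m.cast_nonneg hm 2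
  have hmm : (m : ℝ) ≤ (m : ℝ) ^ 2 := by
    rcases m.eq_zero_or_pos with rfl | hpos
    · simp
    · nlinarith [(Nat.one_le_cast (α := ℝ)).2 hpos]
  nlinarith [mul_le_mul_of_nonneg_left (hmm.trans hm2) hc]

lemma sum_exp_neg_mul_sq_le_of_injOn {ι : Type*} {s : Finset ι} {x : ι → ℝ} {g : ι → ℕ}
    (hg : Set.InjOn g s) (hgx : ∀ i ∈ s, (g i : ℝ) ≤ |x i|) {c : ℝ} (hc : 0 < c) :
    ∑ i ∈ s, Real.exp (-c * x i ^ 2) ≤ (1 - Real.exp (-c))⁻¹ :=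
  calc ∑ i ∈ s, Real.exp (-c * x i ^ 2) ≤ ∑ i ∈ s, Real.exp (-c) ^ g i :=
        Finset.sum_le_sum fun i hi ↦ exp_neg_mul_sq_le_pow hc.le (hgx i hi)
    _ ≤ (1 - Real.exp (-c))⁻¹ :=
        sum_pow_le_of_injOn hg (Real.exp_nonneg _) (Real.exp_lt_one_iff.2 (neg_lt_zero.2 hc))

lemma inv_one_sub_exp_neg_le {c : ℝ} (hc : 0 < c) : (1 - Real.exp (-c))⁻¹ ≤ 1 + c⁻¹ := by
  have hexp : Real.exp (-c) * (1 + c) ≤ 1 := by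
    rw [Real.exp_neg]
    exact inv_mul_le_one_of_le₀ (by linarith [Real.add_one_le_exp c]) (Real.exp_pos c).le
  rw [inv_le_iff_one_le_mul₀ (by linarith [Real.exp_lt_one_iff.2 (neg_lt_zero.2 hc)])]
  field_simp
  nlinarith

/-- Split the integers at `⌊t⌋`; on each side `k ↦ |k - ⌊t⌋|` (shifted by one above) is an
injection into `ℕ` bounded by `|k - t|`. -/
lemma sum_exp_neg_mul_sq_int_sub_le {c : ℝ} (hc : 0 < c) (t : ℝ) (K : Finset ℤ) :
    ∑ k ∈ K, Real.exp (-c * ((k : ℝ) - t) ^ 2) ≤ 2 * (1 + c⁻¹) := by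
  set b := ⌊t⌋
  have hb : (b : ℝ) ≤ t := Int.floor_le t
  have hb' : t < b + 1 := Int.lt_floor_add_one t
  have below : ∑ k ∈ K with k ≤ b, Real.exp (-c * ((k : ℝ) - t) ^ 2) ≤ (1 - Real.exp (-c))⁻¹ := by
    refine sum_exp_neg_mul_sq_le_of_injOn (g := fun k ↦ (b - k).toNat) ?_ ?_ hc
    · intro k hk l hl hkl
      simp only [Finset.coe_filter, Set.mem_ofPred_eq] at hk hl hkl
      omega
    · intro k hk
      have hkb := (Finset.mem_filter.1 hk).2
      have hcast : ((b - k).toNat : ℝ) = b - k := mod_cast Int.toNat_of_nonneg (by omega)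
      have hk : (k : ℝ) ≤ b := mod_cast hkb
      rw [hcast, abs_sub_comm, le_abs]
      exact Or.inl (by linarith)
  have above : ∑ k ∈ K with ¬k ≤ b, Real.exp (-c * ((k : ℝ) - t) ^ 2) ≤
      (1 - Real.exp (-c))⁻¹ := by
    refine sum_exp_neg_mul_sq_le_of_injOn (g := fun k ↦ (k - b - 1).toNat) ?_ ?_ hc
    · intro k hk l hl hkl
      simp only [Finset.coe_filter, Set.mem_ofPred_eq] at hk hl hkl
      omega
    · intro k hk
      have hkb := (Finset.mem_filter.1 hk).2
      have hcast : ((k - b - 1).toNat : ℝ) = k - b - 1 := mod_cast Int.toNat_of_nonneg (by omega)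
      rw [hcast, le_abs]
      exact Or.inl (by linarith)
  rw [← Finset.sum_filter_add_sum_filter_not K (· ≤ b)]
  linarith [inv_one_sub_exp_neg_le hc]

lemma three_div_mul_sq_sub_le_nine_div_mul_sq_sub {w u t n N : ℝ} (hw : 0 < w) (hN : 0 < N)
    (hu : 0 ≤ u) (ht : 0 ≤ t) (hun : u ^ 2 = 2 * w ^ 2 * n) (htN : t ^ 2 = 2 * w ^ 2 * N / 3) :
    3 / (2 * w ^ 2) * (u - t) ^ 2 ≤ 9 / N * (n - N / 3) ^ 2 := by
  have hn : n = u ^ 2 / (2 * w ^ 2) := by field_simp; linarith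
  have hN' : N = 3 * t ^ 2 / (2 * w ^ 2) := by field_simp; linarith
  have ht0 : 0 < t := ht.lt_of_ne (by rintro rfl; nlinarith [mul_pos (pow_pos hw 2) hN])
  have core : t ^ 2 * (u - t) ^ 2 ≤ (u ^ 2 - t ^ 2) ^ 2 := by
    have : t ^ 2 ≤ (u + t) ^ 2 := by nlinarith
    nlinarith [mul_le_mul_of_nonneg_right this (sq_nonneg (u - t))]
  subst hn hN'
  rw [div_mul_eq_mul_div, div_mul_eq_mul_div, div_le_div_iff₀ (by positivity) (by positivity)]
  field_simp
  nlinarith [core, pow_pos hw 2, pow_pos ht0 2]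

def lambdaWeight (N n : ℕ) : ℝ :=
  3 / Real.sqrt (Real.pi * N) * Real.exp (-(9 / N) * ((n : ℝ) - N / 3) ^ 2)

lemma lambdaWeight_nonneg (N n : ℕ) : 0 ≤ lambdaWeight N n := by
  unfold lambdaWeight
  positivity

def jumpSet (N : ℕ) (w : ℝ) : Finset ℕ :=
  (Finset.range (N + 1)).filter fun n ↦ n ≠ 0 ∧ ∃ k : ℤ, w * Real.sqrt (2 * n) = k

lemma sum_jumpSet_exp_le {N : ℕ} (hN : 1 ≤ N) {w : ℝ} (hw : 0 < w) :
    ∑ n ∈ jumpSet N w, Real.exp (-(9 / N) * ((n : ℝ) - N / 3) ^ 2) ≤ 2 * (1 + 2 * w ^ 2 / 3) := by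
  have hN0 : (0 : ℝ) < N := by exact_mod_cast hN
  set c := 3 / (2 * w ^ 2)
  set t := Real.sqrt (2 * w ^ 2 * N / 3)
  set k : ℕ → ℤ := fun n ↦ ⌊w * Real.sqrt (2 * n)⌋
  have hk : ∀ n ∈ jumpSet N w, (k n : ℝ) = w * Real.sqrt (2 * n) := by
    intro n hn
    obtain ⟨-, -, m, hm⟩ := Finset.mem_filter.1 hn
    simp only [k, hm, Int.floor_intCast]
  have hinj : Set.InjOn k (jumpSet N w) := by
    intro x hx y hy hxy
    have h : Real.sqrt (2 * x) = Real.sqrt (2 * y) := by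
      refine mul_left_cancel₀ hw.ne' ?_
      rw [← hk x hx, ← hk y hy, hxy]
    rw [Real.sqrt_inj (by positivity) (by positivity)] at h
    exact_mod_cast (mul_right_inj' two_ne_zero).1 h
  have hexp : ∀ n ∈ jumpSet N w, Real.exp (-(9 / N) * ((n : ℝ) - N / 3) ^ 2) ≤
      Real.exp (-c * ((k n : ℝ) - t) ^ 2) := by
    intro n hn
    rw [Real.exp_le_exp, neg_mul, neg_mul, neg_le_neg_iff, hk n hn]
    refine three_div_mul_sq_sub_le_nine_div_mul_sq_sub hw hN0 (by positivity)
      (Real.sqrt_nonneg _) ?_ (Real.sq_sqrt (by positivity))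
    rw [mul_pow, Real.sq_sqrt (by positivity)]
    ring
  calc ∑ n ∈ jumpSet N w, Real.exp (-(9 / N) * ((n : ℝ) - N / 3) ^ 2)
      ≤ ∑ n ∈ jumpSet N w, Real.exp (-c * ((k n : ℝ) - t) ^ 2) := Finset.sum_le_sum hexp
    _ = ∑ m ∈ (jumpSet N w).image k, Real.exp (-c * ((m : ℝ) - t) ^ 2) :=
        (Finset.sum_image (f := fun m : ℤ ↦ Real.exp (-c * ((m : ℝ) - t) ^ 2)) hinj).symm
    _ ≤ 2 * (1 + c⁻¹) := sum_exp_neg_mul_sq_int_sub_le (by positivity) t _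
    _ = 2 * (1 + 2 * w ^ 2 / 3) := by simp only [c, inv_div]

lemma tendsto_fract_nhdsLT (y : ℝ) :
    Tendsto Int.fract (𝓝[<] y) (𝓝 (Int.fract y + if ∃ k : ℤ, y = k then 1 else 0)) := by
  by_cases hy : ∃ k : ℤ, y = k
  · obtain ⟨k, rfl⟩ := hy
    simpa using tendsto_fract_left' k
  · rw [if_neg hy, add_zero]
    exact (continuousAt_fract fun h ↦ hy ⟨_, h⟩).tendsto.mono_left nhdsWithin_le_nhds

lemma tendsto_fract_mul_nhdsLT {s : ℝ} (hs : 0 < s) (w : ℝ) :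
    Tendsto (fun x ↦ Int.fract (x * s)) (𝓝[<] w)
      (𝓝 (Int.fract (w * s) + if ∃ k : ℤ, w * s = k then 1 else 0)) := by
  have hmul : Tendsto (· * s) (𝓝[<] w) (𝓝[<] (w * s)) :=
    tendsto_nhdsWithin_of_tendsto_nhds_of_eventually_within _
      ((continuous_mul_const s).tendsto w |>.mono_left nhdsWithin_le_nhds)
      (eventually_nhdsWithin_of_forall fun x hx ↦ mul_lt_mul_of_pos_right hx hs)
  exact (tendsto_fract_nhdsLT (w * s)).comp hmul

lemma tendsto_fract_mul_sqrt_nhdsLT (w : ℝ) (n : ℕ) :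
    Tendsto (fun x ↦ Int.fract (x * Real.sqrt (2 * n))) (𝓝[<] w)
      (𝓝 (Int.fract (w * Real.sqrt (2 * n)) +
        if n ≠ 0 ∧ ∃ k : ℤ, w * Real.sqrt (2 * n) = k then 1 else 0)) := by
  rcases n.eq_zero_or_pos with rfl | hn
  · simp
  · simpa only [hn.ne', ne_eq, not_false_eq_true, true_and] using
      tendsto_fract_mul_nhdsLT (Real.sqrt_pos.2 (by positivity)) w

lemma continuousAt_fract_mul_sqrt {w : ℝ} {n : ℕ}
    (h : ¬(n ≠ 0 ∧ ∃ k : ℤ, w * Real.sqrt (2 * n) = k)) :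
    ContinuousAt (fun x ↦ Int.fract (x * Real.sqrt (2 * n))) w := by
  rcases n.eq_zero_or_pos with rfl | hn
  · simpa using continuousAt_const
  · have hw : w * Real.sqrt (2 * n) ≠ ⌊w * Real.sqrt (2 * n)⌋ := fun h' ↦ h ⟨hn.ne', _, h'⟩
    exact (continuousAt_fract hw).comp (f := (· * Real.sqrt (2 * n)))
      (continuous_mul_const _).continuousAt

lemma Lambda_eq (N : ℕ) (x : ℝ) :
    Lambda N x = -Real.sqrt (3 / 2) * stdPhi x *
      ∑ n ∈ Finset.range (N + 1), lambdaWeight N n * (Int.fract (x * Real.sqrt (2 * n)) - 1 / 2) :=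
  rfl

lemma stdPhi_nonneg (w : ℝ) : 0 ≤ stdPhi w := by
  unfold stdPhi
  positivity

lemma stdPhi_continuous : Continuous stdPhi := by
  unfold stdPhi
  fun_prop

lemma stdCDF_continuous : Continuous stdCDF := by
  have hint : Integrable stdPhi := by
    convert (integrable_exp_neg_mul_sq (b := 1 / 2) (by norm_num)).const_mul
      (Real.sqrt (2 * Real.pi))⁻¹ using 2 with x
    rw [stdPhi, div_eq_inv_mul]
    ring_nf
  have h : ∀ x, stdCDF x = stdCDF 0 + ∫ t in (0 : ℝ)..x, stdPhi t := fun x ↦ by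
    rw [stdCDF, stdCDF, ← intervalIntegral.integral_Iic_sub_Iic hint.integrableOn hint.integrableOn]
    ring
  rw [funext h]
  exact continuous_const.add (hint.continuous_primitive 0)

lemma tendsto_Lambda_nhdsLT (N : ℕ) (w : ℝ) :
    Tendsto (Lambda N) (𝓝[<] w) (𝓝 (Lambda N w -
      Real.sqrt (3 / 2) * stdPhi w * ∑ n ∈ jumpSet N w, lambdaWeight N n)) := by
  have hsum := tendsto_finsetSum (Finset.range (N + 1)) fun n _ ↦
    ((tendsto_fract_mul_sqrt_nhdsLT w n).sub_const (1 / 2)).const_mul (lambdaWeight N n)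
  have hphi : Tendsto (fun x ↦ -Real.sqrt (3 / 2) * stdPhi x) (𝓝[<] w)
      (𝓝 (-Real.sqrt (3 / 2) * stdPhi w)) :=
    ((continuous_const.mul stdPhi_continuous).tendsto w).mono_left nhdsWithin_le_nhds
  convert hphi.mul hsum using 2
  · exact Lambda_eq N _
  have hsplit : ∑ n ∈ Finset.range (N + 1), lambdaWeight N n * ((Int.fract (w * Real.sqrt (2 * n)) +
      if n ≠ 0 ∧ ∃ k : ℤ, w * Real.sqrt (2 * n) = k then 1 else 0) - 1 / 2) =
      ∑ n ∈ Finset.range (N + 1), lambdaWeight N n * (Int.fract (w * Real.sqrt (2 * n)) - 1 / 2) +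
        ∑ n ∈ jumpSet N w, lambdaWeight N n := by
    rw [jumpSet, Finset.sum_filter, ← Finset.sum_add_distrib]
    refine Finset.sum_congr rfl fun n _ ↦ ?_
    split_ifs <;> ring
  rw [hsplit, Lambda_eq]
  ring

lemma Psi_eventuallyEq (N : ℕ) {w : ℝ} (hw : 0 < w) :
    Psi N =ᶠ[𝓝 w] fun x ↦ stdCDF x + Lambda N x / Real.sqrt N := by
  filter_upwards [Ioi_mem_nhds hw] with x hx
  exact if_pos (le_of_lt hx)

lemma Psi_sub_leftLim (N : ℕ) {w : ℝ} (hw : 0 < w) :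
    Psi N w - Function.leftLim (Psi N) w =
      Real.sqrt (3 / 2) * stdPhi w / Real.sqrt N * ∑ n ∈ jumpSet N w, lambdaWeight N n := by
  have hlim := ((stdCDF_continuous.tendsto w).mono_left nhdsWithin_le_nhds).add
    ((tendsto_Lambda_nhdsLT N w).div_const (Real.sqrt N))
  rw [leftLim_eq_of_tendsto
    (hlim.congr' ((Psi_eventuallyEq N hw).filter_mono nhdsWithin_le_nhds).symm),
    (Psi_eventuallyEq N hw).eq_of_nhds]
  ring

lemma continuousAt_Psi (N : ℕ) {w : ℝ} (hw : 0 < w) (h : jumpSet N w = ∅) :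
    ContinuousAt (Psi N) w := by
  refine ContinuousAt.congr ?_ (Psi_eventuallyEq N hw).symm
  have hsum : ContinuousAt (fun x ↦ ∑ n ∈ Finset.range (N + 1),
      lambdaWeight N n * (Int.fract (x * Real.sqrt (2 * n)) - 1 / 2)) w := by
    refine tendsto_finsetSum _ fun n hn ↦ ?_
    have hn' : ¬(n ≠ 0 ∧ ∃ k : ℤ, w * Real.sqrt (2 * n) = k) := fun hj ↦
      Finset.notMem_empty n (h ▸ Finset.mem_filter.2 ⟨hn, hj⟩)
    exact ((continuousAt_fract_mul_sqrt hn').sub continuousAt_const).const_mul _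
  exact stdCDF_continuous.continuousAt.add
    (((continuous_const.mul stdPhi_continuous).continuousAt.mul hsum).div_const _)

lemma stdPhi_mul_one_add_sq_le_one (w : ℝ) : stdPhi w * (1 + w ^ 2) ≤ 1 := by
  have hexp : Real.exp (-w ^ 2 / 2) * (1 + w ^ 2) ≤ 2 := by
    rw [neg_div, Real.exp_neg, inv_mul_le_iff₀ (Real.exp_pos _)]
    linarith [Real.add_one_le_exp (w ^ 2 / 2), sq_nonneg w]
  have hsqrt : 2 ≤ Real.sqrt (2 * Real.pi) :=
    Real.le_sqrt_of_sq_le (by nlinarith [Real.pi_gt_three])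
  rw [stdPhi, div_mul_eq_mul_div, div_le_one (by positivity)]
  linarith

lemma Psi_sub_leftLim_nonneg (N : ℕ) {w : ℝ} (hw : 0 < w) :
    0 ≤ Psi N w - Function.leftLim (Psi N) w := by
  rw [Psi_sub_leftLim N hw]
  have := Finset.sum_nonneg fun n (_ : n ∈ jumpSet N w) ↦ lambdaWeight_nonneg N n
  have := stdPhi_nonneg w
  positivity

lemma Psi_sub_leftLim_le {N : ℕ} (hN : 1 ≤ N) {w : ℝ} (hw : 0 < w) :
    Psi N w - Function.leftLim (Psi N) w ≤ 12 / N := by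
  rw [Psi_sub_leftLim N hw]
  have hN0 : (0 : ℝ) < N := by exact_mod_cast hN
  have hsqrtN : 0 < Real.sqrt N := Real.sqrt_pos.2 hN0
  have hweights : ∑ n ∈ jumpSet N w, lambdaWeight N n ≤ 6 * (1 + w ^ 2) / Real.sqrt N :=
    calc ∑ n ∈ jumpSet N w, lambdaWeight N n
        = 3 / Real.sqrt (Real.pi * N) *
            ∑ n ∈ jumpSet N w, Real.exp (-(9 / N) * ((n : ℝ) - N / 3) ^ 2) := by
          rw [Finset.mul_sum]; rfl
      _ ≤ 3 / Real.sqrt N * (2 * (1 + 2 * w ^ 2 / 3)) := by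
          gcongr
          · exact le_mul_of_one_le_left hN0.le (by linarith [Real.pi_gt_three])
          · exact sum_jumpSet_exp_le hN hw
      _ ≤ 6 * (1 + w ^ 2) / Real.sqrt N := by
          rw [div_mul_eq_mul_div]
          exact div_le_div_of_nonneg_right (by nlinarith [sq_nonneg w]) hsqrtN.le
  have h32 : Real.sqrt (3 / 2) ≤ 2 := Real.sqrt_le_iff.2 ⟨by norm_num, by norm_num⟩
  calc Real.sqrt (3 / 2) * stdPhi w / Real.sqrt N * ∑ n ∈ jumpSet N w, lambdaWeight N n
      ≤ 2 * stdPhi w / Real.sqrt N * (6 * (1 + w ^ 2) / Real.sqrt N) := by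
        have := Finset.sum_nonneg fun n (_ : n ∈ jumpSet N w) ↦ lambdaWeight_nonneg N n
        have := stdPhi_nonneg w
        gcongr
    _ = 12 * (stdPhi w * (1 + w ^ 2)) / N := by
        field_simp
        rw [Real.sq_sqrt hN0.le]
        ring
    _ ≤ 12 / N := by
        gcongr
        simpa using stdPhi_mul_one_add_sq_le_one w

theorem statement17 :
    (∀ ε > (0 : ℝ), ∃ C > (0 : ℝ), ∀ N : ℕ, 1 ≤ N → ∀ w : ℝ, ε ≤ w →
        0 ≤ Psi N w - Function.leftLim (Psi N) w ∧
          Psi N w - Function.leftLim (Psi N) w ≤ C / N) ∧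
      ∀ N : ℕ, 1 ≤ N → ∀ w : ℝ, 0 < w → ¬ ContinuousAt (Psi N) w →
        ∃ n : ℕ, 1 ≤ n ∧ n ≤ N ∧ ∃ k : ℤ, k ≠ 0 ∧ w * Real.sqrt (2 * n) = (k : ℝ) := by
  refine ⟨fun ε hε ↦ ⟨12, by norm_num, fun N hN w hεw ↦ ?_⟩, fun N _ w hw hdisc ↦ ?_⟩
  · have hw : 0 < w := hε.trans_le hεw
    exact ⟨Psi_sub_leftLim_nonneg N hw, Psi_sub_leftLim_le hN hw⟩
  · obtain ⟨n, hn⟩ := Finset.nonempty_iff_ne_empty.2 fun h ↦ hdisc (continuousAt_Psi N hw h)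
    obtain ⟨hnN, hn0, k, hk⟩ := Finset.mem_filter.1 hn
    have hpos : (0 : ℝ) < k := hk ▸ mul_pos hw (Real.sqrt_pos.2 (by positivity))
    exact ⟨n, Nat.one_le_iff_ne_zero.2 hn0, Nat.lt_succ_iff.1 (Finset.mem_range.1 hnN), k,
      by exact_mod_cast hpos.ne', hk⟩
end
end
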